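/- In the underlying graph W of the gadget (Figure 2), every induced forest containing both u and v has at most 4 vertices. -/
import Mathlib


open SimpleGraph

/- Vertices of the underlying graph `W` of the gadget of Figure 2: `0 = u`, `1 = v`, `2 = w`,
`3 = z`, `4 = t`, `5 = x₁`, `6 = x₂`, `7 = x₃`, `8 = x₄`, `9 = x₅`. -/

/-- The edges of `W`: `wxᵢ` for `i = 1..5`; the 5-cycle `x₁x₂x₃x₄x₅`; `zx₂, zx₃, zu, zv`;
`tx₄, tx₅, tu, tv`; `ux₁, ux₂, ux₅, uv`; `vx₃, vx₄`. -/
def edgesW : Finset (Sym2 (Fin 10)) :=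
  {s(2, 5), s(2, 6), s(2, 7), s(2, 8), s(2, 9),
   s(5, 6), s(6, 7), s(7, 8), s(8, 9), s(5, 9),
   s(3, 6), s(3, 7), s(3, 0), s(3, 1),
   s(4, 8), s(4, 9), s(4, 0), s(4, 1),
   s(0, 5), s(0, 6), s(0, 9), s(0, 1),
   s(1, 7), s(1, 8)}

/-- The underlying (unsigned) graph `W` of the gadget of Figure 2. -/
def W : SimpleGraph (Fin 10) := SimpleGraph.fromEdgeSet ↑edgesW

/-- A vertex set induces a forest if the induced subgraph contains no cycle. -/
def InducedForest (S : Set (Fin 10)) : Prop :=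
  ¬ ∃ (v : Fin 10) (c : W.Walk v v), c.IsCycle ∧ ∀ x ∈ c.support, x ∈ S

instance : DecidableRel W.Adj := fun a b =>
  decidable_of_iff (s(a, b) ∈ edgesW ∧ a ≠ b) (by rw [W, fromEdgeSet_adj, Finset.mem_coe])

def wk0 : W.Walk 0 0 := (.cons (by decide : W.Adj 0 1) (.cons (by decide : W.Adj 1 3) (.cons (by decide : W.Adj 3 0) .nil)))
lemma cyc0 : wk0.IsCycle := ⟨⟨⟨by decide⟩, by simp [wk0]⟩, by decide⟩
lemma mem0 : ∀ x ∈ wk0.support, x ∈ ({0, 1, 3} : Finset (Fin 10)) := by decide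
def wk1 : W.Walk 0 0 := (.cons (by decide : W.Adj 0 1) (.cons (by decide : W.Adj 1 4) (.cons (by decide : W.Adj 4 0) .nil)))
lemma cyc1 : wk1.IsCycle := ⟨⟨⟨by decide⟩, by simp [wk1]⟩, by decide⟩
lemma mem1 : ∀ x ∈ wk1.support, x ∈ ({0, 1, 4} : Finset (Fin 10)) := by decide
def wk2 : W.Walk 0 0 := (.cons (by decide : W.Adj 0 5) (.cons (by decide : W.Adj 5 6) (.cons (by decide : W.Adj 6 0) .nil)))
lemma cyc2 : wk2.IsCycle := ⟨⟨⟨by decide⟩, by simp [wk2]⟩, by decide⟩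
lemma mem2 : ∀ x ∈ wk2.support, x ∈ ({0, 5, 6} : Finset (Fin 10)) := by decide
def wk3 : W.Walk 0 0 := (.cons (by decide : W.Adj 0 5) (.cons (by decide : W.Adj 5 9) (.cons (by decide : W.Adj 9 0) .nil)))
lemma cyc3 : wk3.IsCycle := ⟨⟨⟨by decide⟩, by simp [wk3]⟩, by decide⟩
lemma mem3 : ∀ x ∈ wk3.support, x ∈ ({0, 5, 9} : Finset (Fin 10)) := by decide
def wk4 : W.Walk 1 1 := (.cons (by decide : W.Adj 1 7) (.cons (by decide : W.Adj 7 8) (.cons (by decide : W.Adj 8 1) .nil)))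
lemma cyc4 : wk4.IsCycle := ⟨⟨⟨by decide⟩, by simp [wk4]⟩, by decide⟩
lemma mem4 : ∀ x ∈ wk4.support, x ∈ ({1, 7, 8} : Finset (Fin 10)) := by decide
def wk5 : W.Walk 2 2 := (.cons (by decide : W.Adj 2 6) (.cons (by decide : W.Adj 6 7) (.cons (by decide : W.Adj 7 2) .nil)))
lemma cyc5 : wk5.IsCycle := ⟨⟨⟨by decide⟩, by simp [wk5]⟩, by decide⟩
lemma mem5 : ∀ x ∈ wk5.support, x ∈ ({2, 6, 7} : Finset (Fin 10)) := by decide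
def wk6 : W.Walk 2 2 := (.cons (by decide : W.Adj 2 8) (.cons (by decide : W.Adj 8 9) (.cons (by decide : W.Adj 9 2) .nil)))
lemma cyc6 : wk6.IsCycle := ⟨⟨⟨by decide⟩, by simp [wk6]⟩, by decide⟩
lemma mem6 : ∀ x ∈ wk6.support, x ∈ ({2, 8, 9} : Finset (Fin 10)) := by decide
def wk7 : W.Walk 0 0 := (.cons (by decide : W.Adj 0 1) (.cons (by decide : W.Adj 1 7) (.cons (by decide : W.Adj 7 2) (.cons (by decide : W.Adj 2 5) (.cons (by decide : W.Adj 5 0) .nil)))))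
lemma cyc7 : wk7.IsCycle := ⟨⟨⟨by decide⟩, by simp [wk7]⟩, by decide⟩
lemma mem7 : ∀ x ∈ wk7.support, x ∈ ({0, 1, 7, 2, 5} : Finset (Fin 10)) := by decide
def wk8 : W.Walk 0 0 := (.cons (by decide : W.Adj 0 1) (.cons (by decide : W.Adj 1 8) (.cons (by decide : W.Adj 8 2) (.cons (by decide : W.Adj 2 5) (.cons (by decide : W.Adj 5 0) .nil)))))
lemma cyc8 : wk8.IsCycle := ⟨⟨⟨by decide⟩, by simp [wk8]⟩, by decide⟩
lemma mem8 : ∀ x ∈ wk8.support, x ∈ ({0, 1, 8, 2, 5} : Finset (Fin 10)) := by decide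
def wk9 : W.Walk 0 0 := (.cons (by decide : W.Adj 0 1) (.cons (by decide : W.Adj 1 8) (.cons (by decide : W.Adj 8 2) (.cons (by decide : W.Adj 2 6) (.cons (by decide : W.Adj 6 0) .nil)))))
lemma cyc9 : wk9.IsCycle := ⟨⟨⟨by decide⟩, by simp [wk9]⟩, by decide⟩
lemma mem9 : ∀ x ∈ wk9.support, x ∈ ({0, 1, 8, 2, 6} : Finset (Fin 10)) := by decide
def wk10 : W.Walk 0 0 := (.cons (by decide : W.Adj 0 6) (.cons (by decide : W.Adj 6 2) (.cons (by decide : W.Adj 2 9) (.cons (by decide : W.Adj 9 0) .nil))))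
lemma cyc10 : wk10.IsCycle := ⟨⟨⟨by decide⟩, by simp [wk10]⟩, by decide⟩
lemma mem10 : ∀ x ∈ wk10.support, x ∈ ({0, 6, 2, 9} : Finset (Fin 10)) := by decide
def wk11 : W.Walk 0 0 := (.cons (by decide : W.Adj 0 1) (.cons (by decide : W.Adj 1 7) (.cons (by decide : W.Adj 7 2) (.cons (by decide : W.Adj 2 9) (.cons (by decide : W.Adj 9 0) .nil)))))
lemma cyc11 : wk11.IsCycle := ⟨⟨⟨by decide⟩, by simp [wk11]⟩, by decide⟩
lemma mem11 : ∀ x ∈ wk11.support, x ∈ ({0, 1, 7, 2, 9} : Finset (Fin 10)) := by decide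
def wk12 : W.Walk 0 0 := (.cons (by decide : W.Adj 0 6) (.cons (by decide : W.Adj 6 7) (.cons (by decide : W.Adj 7 1) (.cons (by decide : W.Adj 1 0) .nil))))
lemma cyc12 : wk12.IsCycle := ⟨⟨⟨by decide⟩, by simp [wk12]⟩, by decide⟩
lemma mem12 : ∀ x ∈ wk12.support, x ∈ ({0, 6, 7, 1} : Finset (Fin 10)) := by decide
def wk13 : W.Walk 0 0 := (.cons (by decide : W.Adj 0 1) (.cons (by decide : W.Adj 1 8) (.cons (by decide : W.Adj 8 9) (.cons (by decide : W.Adj 9 0) .nil))))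
lemma cyc13 : wk13.IsCycle := ⟨⟨⟨by decide⟩, by simp [wk13]⟩, by decide⟩
lemma mem13 : ∀ x ∈ wk13.support, x ∈ ({0, 1, 8, 9} : Finset (Fin 10)) := by decide
set_option maxRecDepth 100000 in
lemma coverW : ∀ a b c : Fin 10, a ≠ 0 → a ≠ 1 → b ≠ 0 → b ≠ 1 → c ≠ 0 → c ≠ 1 →
    a ≠ b → a ≠ c → b ≠ c → ({0, 1, 3} : Finset (Fin 10)) ⊆ {0, 1, a, b, c} ∨ ({0, 1, 4} : Finset (Fin 10)) ⊆ {0, 1, a, b, c} ∨ ({0, 5, 6} : Finset (Fin 10)) ⊆ {0, 1, a, b, c} ∨ ({0, 5, 9} : Finset (Fin 10)) ⊆ {0, 1, a, b, c} ∨ ({1, 7, 8} : Finset (Fin 10)) ⊆ {0, 1, a, b, c} ∨ ({2, 6, 7} : Finset (Fin 10)) ⊆ {0, 1, a, b, c} ∨ ({2, 8, 9} : Finset (Fin 10)) ⊆ {0, 1, a, b, c} ∨ ({0, 1, 7, 2, 5} : Finset (Fin 10)) ⊆ {0, 1, a, b, c} ∨ ({0, 1, 8, 2, 5} : Finset (Fin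 10)) ⊆ {0, 1, a, b, c} ∨ ({0, 1, 8, 2, 6} : Finset (Fin 10)) ⊆ {0, 1, a, b, c} ∨ ({0, 6, 2, 9} : Finset (Fin 10)) ⊆ {0, 1, a, b, c} ∨ ({0, 1, 7, 2, 9} : Finset (Fin 10)) ⊆ {0, 1, a, b, c} ∨ ({0, 6, 7, 1} : Finset (Fin 10)) ⊆ {0, 1, a, b, c} ∨ ({0, 1, 8, 9} : Finset (Fin 10)) ⊆ {0, 1, a, b, c} := by decide

/-- Every induced forest of `W` containing both `u` and `v` has at most 4 vertices. -/
theorem stmt16 (S : Finset (Fin 10)) (h : InducedForest ↑S)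
    (hu : (0 : Fin 10) ∈ S) (hv : (1 : Fin 10) ∈ S) : S.card ≤ 4 := by
  by_contra hc
  push_neg at hc
  have h2 : 3 ≤ ((S.erase 1).erase 0).card := by
    rw [Finset.card_erase_of_mem (Finset.mem_erase.mpr ⟨by decide, hu⟩),
      Finset.card_erase_of_mem hv]
    omega
  obtain ⟨a, ha⟩ := Finset.card_pos.mp (by omega : 0 < ((S.erase 1).erase 0).card)
  obtain ⟨b, hb⟩ := Finset.card_pos.mp (by
    rw [Finset.card_erase_of_mem ha]; omega : 0 < (((S.erase 1).erase 0).erase a).card)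
  obtain ⟨c, hcc⟩ := Finset.card_pos.mp (by
    rw [Finset.card_erase_of_mem hb, Finset.card_erase_of_mem ha]; omega :
    0 < ((((S.erase 1).erase 0).erase a).erase b).card)
  obtain ⟨ha0, ha1, haS⟩ : a ≠ 0 ∧ a ≠ 1 ∧ a ∈ S := by
    simp only [Finset.mem_erase] at ha; tauto
  obtain ⟨hba, hb0, hb1, hbS⟩ : b ≠ a ∧ b ≠ 0 ∧ b ≠ 1 ∧ b ∈ S := by
    simp only [Finset.mem_erase] at hb; tauto
  obtain ⟨hcb, hca, hc0, hc1, hcS⟩ : c ≠ b ∧ c ≠ a ∧ c ≠ 0 ∧ c ≠ 1 ∧ c ∈ S := by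
    simp only [Finset.mem_erase] at hcc; tauto
  have hsub : ({0, 1, a, b, c} : Finset (Fin 10)) ⊆ S := by
    intro x hx
    simp only [Finset.mem_insert, Finset.mem_singleton] at hx
    rcases hx with rfl|rfl|rfl|rfl|rfl <;> assumption
  rcases coverW a b c ha0 ha1 hb0 hb1 hc0 hc1 (Ne.symm hba) (Ne.symm hca) (Ne.symm hcb)
    with hs|hs|hs|hs|hs|hs|hs|hs|hs|hs|hs|hs|hs|hs
  · exact h ⟨_, wk0, cyc0, fun x hx => (hs.trans hsub) (mem0 x hx)⟩
  · exact h ⟨_, wk1, cyc1, fun x hx => (hs.trans hsub) (mem1 x hx)⟩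
  · exact h ⟨_, wk2, cyc2, fun x hx => (hs.trans hsub) (mem2 x hx)⟩
  · exact h ⟨_, wk3, cyc3, fun x hx => (hs.trans hsub) (mem3 x hx)⟩
  · exact h ⟨_, wk4, cyc4, fun x hx => (hs.trans hsub) (mem4 x hx)⟩
  · exact h ⟨_, wk5, cyc5, fun x hx => (hs.trans hsub) (mem5 x hx)⟩
  · exact h ⟨_, wk6, cyc6, fun x hx => (hs.trans hsub) (mem6 x hx)⟩
  · exact h ⟨_, wk7, cyc7, fun x hx => (hs.trans hsub) (mem7 x hx)⟩
  · exact h ⟨_, wk8, cyc8, fun x hx => (hs.trans hsub) (mem8 x hx)⟩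
  · exact h ⟨_, wk9, cyc9, fun x hx => (hs.trans hsub) (mem9 x hx)⟩
  · exact h ⟨_, wk10, cyc10, fun x hx => (hs.trans hsub) (mem10 x hx)⟩
  · exact h ⟨_, wk11, cyc11, fun x hx => (hs.trans hsub) (mem11 x hx)⟩
  · exact h ⟨_, wk12, cyc12, fun x hx => (hs.trans hsub) (mem12 x hx)⟩
  · exact h ⟨_, wk13, cyc13, fun x hx => (hs.trans hsub) (mem13 x hx)⟩
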